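/- Let a, b, c, d > 0, T > 0, and let x, y : ℝ → ℝ be differentiable T-periodic functions with x(t) > 0 and y(t) > 0 for all t, satisfying x'(t) = a − b·x(t) − x(t)·y(t) and y'(t) = c − d·y(t) + x(t)·y(t) for all t ∈ ℝ. Then x and y are constant functions. -/

import Mathlib

/-!
The system has a positive equilibrium `(x₀, y₀)`, and along positive solutions the
Lotka–Volterra type function `V = x + y - x₀ log x - y₀ log y` satisfies
`V' = -(a (x - x₀)² / (x x₀) + c (y - y₀)² / (y y₀)) ≤ 0`: subtracting the equilibrium equations
from `ẋ / x = a / x - b - y` and `ẏ / y = c / y - d + x`, the cross terms `±(x - x₀)(y - y₀)` cancel.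
On a periodic solution `V` is periodic and antitone, hence constant, so `V' ≡ 0`, which forces
`x ≡ x₀` and `y ≡ y₀`.
-/

open Real

theorem Function.Periodic.eq_of_antitone {α : Type*} [PartialOrder α] {f : ℝ → α} {T : ℝ}
    (hf : Function.Periodic f T) (hT : 0 < T) (hanti : Antitone f) (s t : ℝ) : f s = f t := by
  suffices key : ∀ s t, f s ≤ f t from le_antisymm (key s t) (key t s)
  intro s t
  obtain ⟨n, hn⟩ := exists_nat_ge ((t - s) / T)
  have hle : t ≤ s + n * T := by
    rw [div_le_iff₀ hT] at hn
    linarith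
  calc f s = f (s + n * T) := (hf.nat_mul n s).symm
    _ ≤ f t := hanti hle

theorem Function.Periodic.hasDerivAt_eq_zero_of_nonpos {f f' : ℝ → ℝ} {T : ℝ}
    (hf : Function.Periodic f T) (hT : 0 < T) (hderiv : ∀ t, HasDerivAt f (f' t) t)
    (hnonpos : ∀ t, f' t ≤ 0) (t : ℝ) : f' t = 0 := by
  have hanti : Antitone f :=
    antitone_of_deriv_nonpos (fun s => (hderiv s).differentiableAt)
      (fun s => (hderiv s).deriv ▸ hnonpos s)
  have hconst : f = fun _ => f t := funext fun s => hf.eq_of_antitone hT hanti s t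
  refine (hderiv t).unique ?_
  rw [hconst]
  exact hasDerivAt_const t (f t)

section NOPO

variable {a b c d : ℝ}

/-- The equilibrium is `x₀ ∈ (0, a / b)` with `y₀ = a / x₀ - b`, where `x₀` is a root of
`b x² - (a + c + b d) x + a d`, which is `a d > 0` at `0` and `-a c / b < 0` at `a / b`. -/
theorem exists_pos_equilibrium (ha : 0 < a) (hb : 0 < b) (hc : 0 < c) (hd : 0 < d) :
    ∃ x₀ y₀ : ℝ, 0 < x₀ ∧ 0 < y₀ ∧ a - b * x₀ - x₀ * y₀ = 0 ∧ c - d * y₀ + x₀ * y₀ = 0 := by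
  set p : ℝ → ℝ := fun x => b * x ^ 2 - (a + c + b * d) * x + a * d
  have hp_cont : ContinuousOn p (Set.Icc 0 (a / b)) := by fun_prop
  have hp_right : p (a / b) = -(a * c / b) := by
    simp only [p]
    field_simp
    ring
  have hzero_mem : (0 : ℝ) ∈ Set.Ioo (p (a / b)) (p 0) := by
    rw [hp_right]
    constructor
    · have : 0 < a * c / b := by positivity
      linarith
    · simpa [p] using mul_pos ha hd
  obtain ⟨x₀, ⟨hx₀_pos, hx₀_lt⟩, hroot⟩ :=
    intermediate_value_Ioo' (by positivity) hp_cont hzero_mem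
  have hroot' : b * x₀ ^ 2 - (a + c + b * d) * x₀ + a * d = 0 := hroot
  refine ⟨x₀, a / x₀ - b, hx₀_pos, ?_, ?_, ?_⟩
  · rw [sub_pos, lt_div_iff₀ hx₀_pos]
    rwa [lt_div_iff₀ hb, mul_comm] at hx₀_lt
  · field_simp
    ring
  · field_simp
    linear_combination -hroot'

theorem eq_of_lyapunov_rate_eq_zero (ha : 0 < a) (hc : 0 < c) {x₀ y₀ x y : ℝ}
    (hx₀ : 0 < x₀) (hy₀ : 0 < y₀) (hx : 0 < x) (hy : 0 < y)
    (h : a * (x - x₀) ^ 2 / (x * x₀) + c * (y - y₀) ^ 2 / (y * y₀) = 0) : x = x₀ ∧ y = y₀ := by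
  rw [add_eq_zero_iff_of_nonneg (by positivity) (by positivity)] at h
  simpa [ha.ne', hc.ne', hx.ne', hy.ne', hx₀.ne', hy₀.ne', sub_eq_zero] using h

variable {x₀ y₀ : ℝ} {x y : ℝ → ℝ} {t : ℝ}

theorem hasDerivAt_lyapunov (he₁ : a - b * x₀ - x₀ * y₀ = 0) (he₂ : c - d * y₀ + x₀ * y₀ = 0)
    (hx₀ : x₀ ≠ 0) (hy₀ : y₀ ≠ 0) (hxt : x t ≠ 0) (hyt : y t ≠ 0)
    (hx : HasDerivAt x (a - b * x t - x t * y t) t)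
    (hy : HasDerivAt y (c - d * y t + x t * y t) t) :
    HasDerivAt (fun s => x s + y s - x₀ * log (x s) - y₀ * log (y s))
      (-(a * (x t - x₀) ^ 2 / (x t * x₀) + c * (y t - y₀) ^ 2 / (y t * y₀))) t := by
  refine (((hx.add hy).sub ((hx.log hxt).const_mul x₀)).sub
    ((hy.log hyt).const_mul y₀)).congr_deriv ?_
  rw [show a = b * x₀ + x₀ * y₀ by linarith, show c = d * y₀ - x₀ * y₀ by linarith]
  field_simp
  ring

end NOPO

theorem stmt_4 (a b c d T : ℝ) (ha : 0 < a) (hb : 0 < b) (hc : 0 < c) (hd : 0 < d)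
    (hT : 0 < T) (x y : ℝ → ℝ)
    (hx : Differentiable ℝ x) (hy : Differentiable ℝ y)
    (hxper : Function.Periodic x T) (hyper : Function.Periodic y T)
    (hxpos : ∀ t : ℝ, 0 < x t) (hypos : ∀ t : ℝ, 0 < y t)
    (hxd : ∀ t : ℝ, deriv x t = a - b * x t - x t * y t)
    (hyd : ∀ t : ℝ, deriv y t = c - d * y t + x t * y t) :
    (∀ t : ℝ, x t = x 0) ∧ (∀ t : ℝ, y t = y 0) := by
  obtain ⟨x₀, y₀, hx₀, hy₀, he₁, he₂⟩ := exists_pos_equilibrium ha hb hc hd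
  have hV : ∀ t, HasDerivAt (fun s => x s + y s - x₀ * log (x s) - y₀ * log (y s))
      (-(a * (x t - x₀) ^ 2 / (x t * x₀) + c * (y t - y₀) ^ 2 / (y t * y₀))) t := fun t =>
    hasDerivAt_lyapunov he₁ he₂ hx₀.ne' hy₀.ne' (hxpos t).ne' (hypos t).ne'
      (hxd t ▸ (hx t).hasDerivAt) (hyd t ▸ (hy t).hasDerivAt)
  have hVper : Function.Periodic (fun s => x s + y s - x₀ * log (x s) - y₀ * log (y s)) T :=
    fun s => by simp only [hxper s, hyper s]
  have hequil : ∀ t, x t = x₀ ∧ y t = y₀ := fun t =>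
    eq_of_lyapunov_rate_eq_zero ha hc hx₀ hy₀ (hxpos t) (hypos t) <| neg_eq_zero.mp <|
      hVper.hasDerivAt_eq_zero_of_nonpos hT hV
        (fun s => neg_nonpos.mpr (by have := hxpos s; have := hypos s; positivity)) t
  exact ⟨fun t => (hequil t).1.trans (hequil 0).1.symm,
    fun t => (hequil t).2.trans (hequil 0).2.symm⟩
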